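/- Let X be a compact metric space and f₁,…,f_k homeomorphisms of X. Suppose there exist finite words α = α₁…α_s and β = β₋ₜ…β₋₁ such that every x ∈ X satisfies: either f^i_α(x) ∈ Q for some 1 ≤ i ≤ s, or (f⁻¹)^j_β(x) ∈ Q′ for some 1 ≤ j ≤ t, where Q, Q′ ⊆ X. Then for every two-sided sequence ω ∈ {1,…,k}^ℤ with dense shift orbit and every x ∈ X, either the forward fiberwise orbit of x along some shift of ω meets Q withing the α-window, or the backward fiberwise orbit meets Q′ within the β-window. -/
import Mathlib


/-- Apply the maps of an IFS along a finite word: `f_{w_n} ∘ ⋯ ∘ f_{w_1}`. -/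
def applyWord {X : Type*} {k : ℕ} (f : Fin k → X → X) (w : List (Fin k)) (x : X) : X :=
  w.foldl (fun y i => f i y) x

/-- Apply the inverses of the IFS generators along a finite word. -/
def applyInvWord {X : Type*} [TopologicalSpace X] {k : ℕ} (f : Fin k → X ≃ₜ X)
    (w : List (Fin k)) (x : X) : X :=
  w.foldl (fun y i => (f i).symm y) x

/-- The power `σⁿ` (n ∈ ℤ) of the two-sided shift: `(σⁿ ω)ᵢ = ω_{i+n}`. -/
def shiftZ {k : ℕ} (n : ℤ) (ω : ℤ → Fin k) : ℤ → Fin k := fun i => ω (i + n)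

/-- Forward fiberwise iterates along a two-sided word:
`f^m_ω(x) = f_{ω_{m-1}} ∘ ⋯ ∘ f_{ω_0}(x)`. -/
def fwdIter {X : Type*} [TopologicalSpace X] {k : ℕ} (f : Fin k → X ≃ₜ X)
    (ω : ℤ → Fin k) (x : X) : ℕ → X
  | 0 => x
  | m + 1 => f (ω m) (fwdIter f ω x m)

/-- Backward fiberwise iterates along a two-sided word:
`f^{-m}_ω(x) = f⁻¹_{ω_{-m}} ∘ ⋯ ∘ f⁻¹_{ω_{-1}}(x)`. -/
def bwdIter {X : Type*} [TopologicalSpace X] {k : ℕ} (f : Fin k → X ≃ₜ X)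
    (ω : ℤ → Fin k) (x : X) : ℕ → X
  | 0 => x
  | m + 1 => (f (ω (-(m + 1 : ℤ)))).symm (bwdIter f ω x m)

lemma applyWord_take_succ {X : Type*} {k : ℕ} (f : Fin k → X → X) (w : List (Fin k))
    (x : X) (i : ℕ) (hi : i < w.length) :
    applyWord f (w.take (i + 1)) x = f (w.get ⟨i, hi⟩) (applyWord f (w.take i) x) := by
  rw [applyWord, List.take_succ, List.getElem?_eq_getElem hi, List.foldl_append]
  rfl

lemma fwd_match {X : Type*} [TopologicalSpace X] {k : ℕ} (f : Fin k → X ≃ₜ X)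
    (θ : ℤ → Fin k) (w : List (Fin k)) (x : X)
    (h : ∀ m : ℕ, (hm : m < w.length) → θ m = w.get ⟨m, hm⟩) :
    ∀ i : ℕ, i ≤ w.length → fwdIter f θ x i = applyWord (fun j => ⇑(f j)) (w.take i) x := by
  intro i
  induction i with
  | zero => intro _; rfl
  | succ i ih =>
    intro hle
    have hi : i < w.length := Nat.lt_of_succ_le hle
    rw [fwdIter, ih (le_of_lt hi), applyWord_take_succ _ _ _ _ hi, h i hi]

lemma applyInvWord_take_succ {X : Type*} [TopologicalSpace X] {k : ℕ} (f : Fin k → X ≃ₜ X)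
    (w : List (Fin k)) (x : X) (i : ℕ) (hi : i < w.length) :
    applyInvWord f (w.take (i + 1)) x = (f (w.get ⟨i, hi⟩)).symm (applyInvWord f (w.take i) x) := by
  rw [applyInvWord, List.take_succ, List.getElem?_eq_getElem hi, List.foldl_append]
  rfl

lemma bwd_match {X : Type*} [TopologicalSpace X] {k : ℕ} (f : Fin k → X ≃ₜ X)
    (θ : ℤ → Fin k) (w : List (Fin k)) (x : X)
    (h : ∀ m : ℕ, (hm : m < w.length) → θ (-(m + 1 : ℤ)) = w.get ⟨m, hm⟩) :
    ∀ i : ℕ, i ≤ w.length → bwdIter f θ x i = applyInvWord f (w.take i) x := by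
  intro i
  induction i with
  | zero => intro _; rfl
  | succ i ih =>
    intro hle
    have hi : i < w.length := Nat.lt_of_succ_le hle
    rw [bwdIter, ih (le_of_lt hi), applyInvWord_take_succ _ _ _ _ hi, h i hi]

theorem stmt16 {X : Type*} [MetricSpace X] [CompactSpace X] {k : ℕ}
    (f : Fin k → X ≃ₜ X)
    (α β : List (Fin k)) (hα : α ≠ []) (hβ : β ≠ [])
    (Q Q' : Set X)
    (hcover : ∀ x : X,
      (∃ i : ℕ, 1 ≤ i ∧ i ≤ α.length ∧ applyWord (fun j => ⇑(f j)) (α.take i) x ∈ Q) ∨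
      (∃ j : ℕ, 1 ≤ j ∧ j ≤ β.length ∧ applyInvWord f (β.take j) x ∈ Q'))
    (ω : ℤ → Fin k) (hdense : Dense {θ : ℤ → Fin k | ∃ n : ℤ, θ = shiftZ n ω}) :
    ∀ x : X, ∃ n : ℤ,
      (∃ i : ℕ, 1 ≤ i ∧ i ≤ α.length ∧ fwdIter f (shiftZ n ω) x i ∈ Q) ∨
      (∃ j : ℕ, 1 ≤ j ∧ j ≤ β.length ∧ bwdIter f (shiftZ n ω) x j ∈ Q') := by
  intro x
  -- the cylinder set
  set U : Set (ℤ → Fin k) :=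
    {θ | (∀ m : ℕ, (hm : m < α.length) → θ m = α.get ⟨m, hm⟩) ∧
         (∀ m : ℕ, (hm : m < β.length) → θ (-(m + 1 : ℤ)) = β.get ⟨m, hm⟩)} with hU
  have hopen : IsOpen U := by
    have : U = (⋂ m ∈ Finset.range α.length,
        {θ : ℤ → Fin k | ∀ hm : m < α.length, θ m = α.get ⟨m, hm⟩}) ∩
        (⋂ m ∈ Finset.range β.length,
        {θ : ℤ → Fin k | ∀ hm : m < β.length, θ (-(m + 1 : ℤ)) = β.get ⟨m, hm⟩}) := by
      ext θ
      simp only [hU, Set.mem_setOf_eq, Set.mem_inter_iff, Set.mem_iInter, Finset.mem_range]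
      constructor
      · rintro ⟨h1, h2⟩
        exact ⟨fun m _ hm => h1 m hm, fun m _ hm => h2 m hm⟩
      · rintro ⟨h1, h2⟩
        exact ⟨fun m hm => h1 m hm hm, fun m hm => h2 m hm hm⟩
    rw [this]
    apply IsOpen.inter
    · apply isOpen_biInter_finset
      intro m _
      by_cases hm : m < α.length
      · have : {θ : ℤ → Fin k | ∀ hm : m < α.length, θ m = α.get ⟨m, hm⟩} =
            (fun θ : ℤ → Fin k => θ (m : ℤ)) ⁻¹' {α.get ⟨m, hm⟩} := by
          ext θ; simp [hm]
        rw [this]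
        exact (continuous_apply (m : ℤ)).isOpen_preimage _ (isOpen_discrete _)
      · have : {θ : ℤ → Fin k | ∀ hm : m < α.length, θ m = α.get ⟨m, hm⟩} = Set.univ := by
          ext θ; simp [hm]
        rw [this]; exact isOpen_univ
    · apply isOpen_biInter_finset
      intro m _
      by_cases hm : m < β.length
      · have : {θ : ℤ → Fin k | ∀ hm : m < β.length, θ (-(m + 1 : ℤ)) = β.get ⟨m, hm⟩} =
            (fun θ : ℤ → Fin k => θ (-(m + 1 : ℤ))) ⁻¹' {β.get ⟨m, hm⟩} := by
          ext θ; simp [hm]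
        rw [this]
        exact (continuous_apply (-(m + 1 : ℤ))).isOpen_preimage _ (isOpen_discrete _)
      · have : {θ : ℤ → Fin k | ∀ hm : m < β.length, θ (-(m + 1 : ℤ)) = β.get ⟨m, hm⟩} =
            Set.univ := by
          ext θ; simp [hm]
        rw [this]; exact isOpen_univ
  have hne : U.Nonempty := by
    refine ⟨fun i : ℤ => if hi : 0 ≤ i ∧ i < α.length then α.get ⟨i.toNat, by omega⟩
      else if hj : -(β.length : ℤ) ≤ i ∧ i < 0 then β.get ⟨(-i - 1).toNat, by omega⟩
      else α.head hα, ?_, ?_⟩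
    · intro m hm
      have h1 : (0 : ℤ) ≤ (m : ℤ) ∧ (m : ℤ) < α.length := by constructor <;> omega
      simp only [h1, dif_pos, Int.toNat_natCast]
      simp
    · intro m hm
      have h1 : ¬((0 : ℤ) ≤ (-(m + 1 : ℤ)) ∧ (-(m + 1 : ℤ)) < α.length) := by omega
      have h2 : (-(β.length : ℤ) ≤ -(m + 1 : ℤ)) ∧ (-(m + 1 : ℤ)) < 0 := by
        constructor <;> omega
      have h3 : (-(-((m : ℤ) + 1)) - 1).toNat = m := by omega
      simp only [h1, dif_neg, not_false_iff, h2, dif_pos, h3]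
      simp
  obtain ⟨θ, hθU, ⟨n, rfl⟩⟩ := hdense.inter_open_nonempty U hopen hne
  refine ⟨n, ?_⟩
  rcases hcover x with ⟨i, h1, h2, hQ⟩ | ⟨j, h1, h2, hQ⟩
  · left
    exact ⟨i, h1, h2, by rw [fwd_match f _ α x hθU.1 i h2]; exact hQ⟩
  · right
    exact ⟨j, h1, h2, by rw [bwd_match f _ β x hθU.2 j h2]; exact hQ⟩
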